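/- Let u : ℝ^n → [−1,1] be a Lipschitz continuous Q-minimizer of the energy E, let θ₀ ∈ (−1, −1/2] and θ ∈ [θ₀, 1), let x₀ be in the closure of ℝ^n_+, and suppose there exist c > 0 and r₀ ≥ 1 such that L^n(B_r^+(x₀) ∩ {u > θ₀}) ≥ c r^n for every r ≥ r₀. Then there exist c' > 0 and r₁ ≥ r₀, depending only on n, Q, p, θ₀, θ, c, r₀, the constant C₀ in the potential bounds, and the Lipschitz constant of u, such that L^n(B_r^+(x₀) ∩ {u > θ}) ≥ c' r^n for every r ≥ r₁. -/

import Mathlib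

open MeasureTheory Set Metric

/-- The open half-space `{x : xₙ > 0}` of `ℝⁿ` (last coordinate positive). -/
def upperHalfSpace (n : ℕ) (hn : 0 < n) : Set (EuclideanSpace ℝ (Fin n)) :=
  {x | 0 < x ⟨n - 1, Nat.sub_lt hn one_pos⟩}

/-- The hyperplane `{x : xₙ = 0}` of `ℝⁿ` (last coordinate zero). -/
def bottomHyperplane (n : ℕ) (hn : 0 < n) : Set (EuclideanSpace ℝ (Fin n)) :=
  {x | x ⟨n - 1, Nat.sub_lt hn one_pos⟩ = 0}

/-- The energy `E_Ω(u) = ∫_{Ω ∩ ℝⁿ₊} (|∇u|^p + F(u)) dx + ∫_{Ω ∩ {xₙ=0}} G(u) dH^{n-1}`. -/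
noncomputable def energyE (n : ℕ) (hn : 0 < n) (p : ℝ) (F G : ℝ → ℝ)
    (Ω : Set (EuclideanSpace ℝ (Fin n))) (u : EuclideanSpace ℝ (Fin n) → ℝ) : ℝ :=
  (∫ x in Ω ∩ upperHalfSpace n hn, (‖fderiv ℝ u x‖ ^ p + F (u x))) +
  (∫ x in Ω ∩ bottomHyperplane n hn, G (u x) ∂(μH[(n - 1 : ℕ)]))

/-- `u` is a `Q`-minimizer of the energy: for every bounded open `Ω` and every Lipschitz
perturbation `φ` supported in `Ω` with `u + φ` taking values in `[-1,1]`,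
`E_Ω(u) ≤ Q · E_Ω(u + φ)`. -/
def IsQMinimizer (n : ℕ) (hn : 0 < n) (p Q : ℝ) (F G : ℝ → ℝ)
    (u : EuclideanSpace ℝ (Fin n) → ℝ) : Prop :=
  ∀ Ω : Set (EuclideanSpace ℝ (Fin n)), IsOpen Ω → Bornology.IsBounded Ω →
    ∀ φ : EuclideanSpace ℝ (Fin n) → ℝ, (∃ K, LipschitzWith K φ) →
      Function.support φ ⊆ Ω → (∀ x, u x + φ x ∈ Icc (-1 : ℝ) 1) →
      energyE n hn p F G Ω u ≤ Q * energyE n hn p F G Ω (fun x => u x + φ x)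

/-- The double-well potential bounds: `max(F τ, G τ) ≤ C₀ (1-τ²)^p` and
`F τ ≥ (1-τ²)^p / C₀` for `τ ∈ [-1,1]`. -/
def PotentialBounds (p C₀ : ℝ) (F G : ℝ → ℝ) : Prop :=
  ∀ τ ∈ Icc (-1 : ℝ) 1,
    max (F τ) (G τ) ≤ C₀ * (1 - τ ^ 2) ^ p ∧ (1 - τ ^ 2) ^ p / C₀ ≤ F τ

/-!
Compare `u` on `B_{r+2}(x₀)` with the competitor that equals `-1` on `B_r(x₀)`, equals `u`
outside `B_{r+2}(x₀)` and interpolates with slope one in between. Since `F(-1) = 0`, its energy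
lives on the annulus `B_{r+2} \ B_r` and on the flat slice `B_{r+2} ∩ {xₙ = 0}`, both of size
`O(r^{n-1})`, so `Q`-minimality bounds the energy of `u` in `B_{r+2}` by `O(r^{n-1})` as well.
On the band `{θ₀ < u ≤ θ}` the potential `F` is bounded below by a positive constant depending
only on `θ₀, θ, p, C₀`, hence the band occupies volume `O(r^{n-1})` in `B_r⁺(x₀)`; this is
negligible against `c rⁿ`, so `{u > θ}` keeps half of the density for large `r`.
-/

open scoped NNReal ENNReal

theorem addHaar_ball_add_diff_ball_le {E : Type*} [NormedAddCommGroup E] [NormedSpace ℝ E]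
    [MeasurableSpace E] [BorelSpace E] [FiniteDimensional ℝ E] [Nontrivial E]
    (μ : Measure E) [μ.IsAddHaarMeasure] (x : E) {r a : ℝ} (hr : 0 ≤ r) (ha : 0 ≤ a) :
    μ (ball x (r + a) \ ball x r) ≤
      ENNReal.ofReal (a * Module.finrank ℝ E * (r + a) ^ (Module.finrank ℝ E - 1)) *
        μ (ball 0 1) := by
  set d := Module.finrank ℝ E
  have hpow : (r + a) ^ d - r ^ d ≤ a * d * (r + a) ^ (d - 1) := by
    have h := (le_abs_self _).trans (abs_pow_sub_pow_le (r + a) r d)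
    rwa [add_sub_cancel_left, abs_of_nonneg ha, abs_of_nonneg (by linarith),
      abs_of_nonneg hr, max_eq_left (by linarith)] at h
  rw [measure_sdiff (ball_subset_ball (by linarith)) measurableSet_ball.nullMeasurableSet
    measure_ball_lt_top.ne, μ.addHaar_ball x (by linarith), μ.addHaar_ball x hr,
    ← ENNReal.sub_mul fun _ _ => measure_ball_lt_top.ne, ← ENNReal.ofReal_sub _ (by positivity)]
  gcongr

theorem exists_hausdorffMeasure_ball_inter_bottomHyperplane_le (n : ℕ) (hn : 0 < n) :
    ∃ C : ℝ, 0 ≤ C ∧ ∀ (x₀ : EuclideanSpace ℝ (Fin n)) (R : ℝ), 0 ≤ R →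
      μH[(n - 1 : ℕ)] (ball x₀ R ∩ bottomHyperplane n hn) ≤ ENNReal.ofReal (C * R ^ (n - 1)) := by
  obtain ⟨d, rfl⟩ : ∃ d, n = d + 1 := ⟨n - 1, by omega⟩
  set i : Fin (d + 1) := ⟨d + 1 - 1, Nat.sub_lt hn one_pos⟩
  set g : (Fin d → ℝ) → EuclideanSpace ℝ (Fin (d + 1)) := fun y =>
    WithLp.toLp 2 (Fin.insertNth (α := fun _ => ℝ) i 0 y)
  set K : ℝ≥0 := (Fintype.card (Fin (d + 1)) : ℝ≥0) ^ (1 / (2 : ℝ≥0∞)).toReal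
  have hg : LipschitzWith K g := by
    have hins : Isometry fun y : Fin d → ℝ => Fin.insertNth (α := fun _ => ℝ) i 0 y := by
      refine Isometry.of_dist_eq fun y z => ?_
      rw [Fin.dist_insertNth_insertNth, dist_self, max_eq_right dist_nonneg]
    have h := (PiLp.lipschitzWith_toLp 2 fun _ : Fin (d + 1) => ℝ).comp hins.lipschitz
    rwa [mul_one] at h
  refine ⟨K ^ d * 2 ^ d, by positivity, fun x₀ R hR => ?_⟩
  have hslice :
      ball x₀ R ∩ bottomHyperplane (d + 1) hn ⊆ g '' closedBall (i.removeNth x₀.ofLp) R := by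
    rintro x ⟨hx, hxi⟩
    refine ⟨i.removeNth x.ofLp, (dist_pi_le_iff hR).2 fun j => ?_, ?_⟩
    · exact (PiLp.dist_apply_le x x₀ _).trans (mem_ball.1 hx).le
    · change WithLp.toLp 2 (Fin.insertNth i 0 (i.removeNth x.ofLp)) = x
      rw [show (0 : ℝ) = x.ofLp i from hxi.symm, Fin.insertNth_self_removeNth]
  calc μH[(d + 1 - 1 : ℕ)] (ball x₀ R ∩ bottomHyperplane (d + 1) hn)
      ≤ μH[(d + 1 - 1 : ℕ)] (g '' closedBall (i.removeNth x₀.ofLp) R) := measure_mono hslice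
    _ ≤ (K : ℝ≥0∞) ^ ((d + 1 - 1 : ℕ) : ℝ) *
          μH[(d + 1 - 1 : ℕ)] (closedBall (i.removeNth x₀.ofLp) R) :=
      hg.hausdorffMeasure_image_le (by positivity) _
    _ = ENNReal.ofReal (K ^ d * 2 ^ d * R ^ (d + 1 - 1)) := by
      simp only [Nat.add_sub_cancel, ENNReal.rpow_natCast]
      rw [show ((d : ℕ) : ℝ) = (Fintype.card (Fin d) : ℕ) by simp, hausdorffMeasure_pi_real,
        Real.volume_pi_closedBall _ hR, Fintype.card_fin, ← ENNReal.ofReal_coe_nnreal,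
        ← ENNReal.ofReal_pow (by positivity), ← ENNReal.ofReal_mul (by positivity), mul_pow,
        mul_assoc]

section Competitor

variable {X : Type*} [PseudoMetricSpace X]

def ballCompetitor (u : X → ℝ) (x₀ : X) (r : ℝ) (x : X) : ℝ :=
  max (-1) (min (u x) (dist x x₀ - (r + 1)))

variable {u : X → ℝ} {x₀ x : X} {r : ℝ}

theorem ballCompetitor_mem_Icc (hu : u x ≤ 1) : ballCompetitor u x₀ r x ∈ Icc (-1) 1 :=
  ⟨le_max_left _ _, max_le (by norm_num) ((min_le_left _ _).trans hu)⟩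

theorem ballCompetitor_eq_neg_one_of_mem_ball (hx : x ∈ ball x₀ r) :
    ballCompetitor u x₀ r x = -1 := by
  have : dist x x₀ - (r + 1) ≤ -1 := by linarith [mem_ball.1 hx]
  exact max_eq_left ((min_le_right _ _).trans this)

theorem ballCompetitor_eq_self_of_notMem_ball (hu : u x ∈ Icc (-1) 1) (hx : x ∉ ball x₀ (r + 2)) :
    ballCompetitor u x₀ r x = u x := by
  have : 1 ≤ dist x x₀ - (r + 1) := by linarith [not_lt.1 (mt mem_ball.2 hx)]
  rw [ballCompetitor, min_eq_left (hu.2.trans this), max_eq_right hu.1]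

theorem support_ballCompetitor_sub_subset (hu : ∀ x, u x ∈ Icc (-1) 1) :
    Function.support (fun x => ballCompetitor u x₀ r x - u x) ⊆ ball x₀ (r + 2) := fun x hx => by
  by_contra hx'
  exact hx (sub_eq_zero.2 (ballCompetitor_eq_self_of_notMem_ball (hu x) hx'))

theorem lipschitzWith_ballCompetitor {L : ℝ≥0} (hu : LipschitzWith L u) :
    LipschitzWith (max L 1) (ballCompetitor u x₀ r) := by
  have hdist : LipschitzWith 1 fun x => dist x x₀ - (r + 1) := by
    simpa using (LipschitzWith.dist_left x₀).sub (LipschitzWith.const (r + 1))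
  exact (hu.min hdist).const_max (-1)

end Competitor

section Potential

variable {p C₀ : ℝ} {F G : ℝ → ℝ}

theorem PotentialBounds.max_le_const (h : PotentialBounds p C₀ F G) (hp : 0 ≤ p) (hC₀ : 0 ≤ C₀)
    {τ : ℝ} (hτ : τ ∈ Icc (-1) 1) : max (F τ) (G τ) ≤ C₀ := by
  have h0 : 0 ≤ 1 - τ ^ 2 := by nlinarith [hτ.1, hτ.2]
  exact (h τ hτ).1.trans (mul_le_of_le_one_right hC₀ (Real.rpow_le_one h0 (by nlinarith) hp))

theorem PotentialBounds.left_neg_one_eq_zero (h : PotentialBounds p C₀ F G) (hp : p ≠ 0)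
    (hF : 0 ≤ F (-1)) : F (-1) = 0 := by
  have h' := (le_max_left _ _).trans (h (-1) (by norm_num)).1
  norm_num [Real.zero_rpow hp] at h'
  linarith

theorem PotentialBounds.le_left_of_mem_Icc (h : PotentialBounds p C₀ F G) (hp : 0 ≤ p)
    (hC₀ : 0 ≤ C₀) {θ₀ θ τ : ℝ} (hθ₀ : -1 ≤ θ₀) (hθ : θ ≤ 1) (hτ : τ ∈ Icc θ₀ θ) :
    (1 - (max |θ₀| |θ|) ^ 2) ^ p / C₀ ≤ F τ := by
  have hτ1 : τ ∈ Icc (-1) 1 := ⟨hθ₀.trans hτ.1, hτ.2.trans hθ⟩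
  have hmax : max |θ₀| |θ| ≤ 1 :=
    max_le (abs_le.2 ⟨hθ₀, by linarith [hτ.1, hτ1.2]⟩) (abs_le.2 ⟨by linarith [hτ.2, hτ1.1], hθ⟩)
  have hsq : τ ^ 2 ≤ (max |θ₀| |θ|) ^ 2 := by
    simpa only [sq_abs] using pow_le_pow_left₀ (abs_nonneg τ) (abs_le_max_abs_abs hτ.1 hτ.2) 2
  calc (1 - (max |θ₀| |θ|) ^ 2) ^ p / C₀ ≤ (1 - τ ^ 2) ^ p / C₀ := by
        gcongr
        nlinarith [(abs_nonneg θ₀).trans (le_max_left _ |θ|)]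
    _ ≤ F τ := (h τ hτ1).2

end Potential

section Density

variable {E : Type*} [NormedAddCommGroup E] [NormedSpace ℝ E] {p : ℝ} {F : ℝ → ℝ} {u : E → ℝ}

/-- The bulk integrand of `energyE`, which unfolds to its integral definitionally. -/
noncomputable def energyDensity (p : ℝ) (F : ℝ → ℝ) (u : E → ℝ) (x : E) : ℝ :=
  ‖fderiv ℝ u x‖ ^ p + F (u x)

theorem energyDensity_nonneg (hF : ∀ τ, 0 ≤ F τ) (x : E) : 0 ≤ energyDensity p F u x :=
  add_nonneg (Real.rpow_nonneg (norm_nonneg _) p) (hF _)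

theorem energyDensity_le (hp : 0 ≤ p) {K : ℝ≥0} (hu : LipschitzWith K u) {C : ℝ} {x : E}
    (hFu : F (u x) ≤ C) : energyDensity p F u x ≤ K ^ p + C :=
  add_le_add (Real.rpow_le_rpow (norm_nonneg _) (norm_fderiv_le_of_lipschitz ℝ hu) hp) hFu

theorem energyDensity_eq_zero (hp : p ≠ 0) {c : ℝ} (hF : F c = 0) {x : E}
    (hu : u =ᶠ[nhds x] fun _ => c) : energyDensity p F u x = 0 := by
  rw [energyDensity, hu.fderiv_eq, fderiv_const_apply, hu.eq_of_nhds, hF, norm_zero,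
    Real.zero_rpow hp, add_zero]

theorem integrableOn_energyDensity [MeasurableSpace E] [BorelSpace E] {μ : Measure E}
    (hp : 0 ≤ p) (hF : Continuous F) (hF0 : ∀ τ, 0 ≤ F τ)
    {K : ℝ≥0} (hu : LipschitzWith K u) {C : ℝ} (hFu : ∀ x, F (u x) ≤ C) {s : Set E}
    (hs : μ s ≠ ∞) : IntegrableOn (energyDensity p F u) s μ :=
  Measure.integrableOn_of_bounded hs
    (((measurable_fderiv ℝ u).norm.pow_const p).add
      (hF.comp hu.continuous).measurable).aestronglyMeasurable
    (ae_of_all _ fun x => by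
      rw [Real.norm_of_nonneg (energyDensity_nonneg hF0 x)]
      exact energyDensity_le hp hu (hFu x))

end Density

section HalfSpaceEnergy

variable {n : ℕ} {hn : 0 < n} {p : ℝ} {F G : ℝ → ℝ}

theorem isOpen_upperHalfSpace : IsOpen (upperHalfSpace n hn) :=
  isOpen_lt continuous_const (PiLp.continuous_apply 2 _ _)

theorem mul_measureReal_le_energyE (hp : 0 ≤ p) (hF : Continuous F) (hF0 : ∀ τ, 0 ≤ F τ)
    (hG0 : ∀ τ, 0 ≤ G τ) {L : ℝ≥0} {u : EuclideanSpace ℝ (Fin n) → ℝ} (hu : LipschitzWith L u)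
    {C : ℝ} (hFu : ∀ x, F (u x) ≤ C) {Ω S : Set (EuclideanSpace ℝ (Fin n))}
    (hΩ : volume Ω ≠ ∞) (hS : MeasurableSet S) (hSΩ : S ⊆ Ω ∩ upperHalfSpace n hn) {δ : ℝ}
    (hδ : ∀ x ∈ S, δ ≤ F (u x)) : δ * volume.real S ≤ energyE n hn p F G Ω u := by
  have hint : IntegrableOn (energyDensity p F u) (Ω ∩ upperHalfSpace n hn) :=
    integrableOn_energyDensity hp hF hF0 hu hFu (measure_ne_top_of_subset inter_subset_left hΩ)
  calc δ * volume.real S ≤ ∫ x in S, energyDensity p F u x :=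
        setIntegral_ge_of_const_le_real hS
          (measure_ne_top_of_subset (hSΩ.trans inter_subset_left) hΩ)
          (fun x hx => (hδ x hx).trans (le_add_of_nonneg_left (Real.rpow_nonneg (norm_nonneg _) p)))
          (hint.mono_set hSΩ)
    _ ≤ ∫ x in Ω ∩ upperHalfSpace n hn, energyDensity p F u x :=
        setIntegral_mono_set hint (ae_of_all _ (energyDensity_nonneg hF0))
          (Filter.Eventually.of_forall hSΩ)
    _ ≤ energyE n hn p F G Ω u := le_add_of_nonneg_right (integral_nonneg fun x => hG0 _)

theorem energyE_ball_le_of_eqOn_ball (hp : 0 < p) (hF0 : ∀ τ, 0 ≤ F τ) (hG0 : ∀ τ, 0 ≤ G τ)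
    (hF1 : F (-1) = 0) {K : ℝ≥0} {v : EuclideanSpace ℝ (Fin n) → ℝ} (hv : LipschitzWith K v)
    {C : ℝ} (hFv : ∀ x, F (v x) ≤ C) (hGv : ∀ x, G (v x) ≤ C)
    {x₀ : EuclideanSpace ℝ (Fin n)} {r R : ℝ} (hv1 : EqOn v (fun _ => -1) (ball x₀ r))
    (hslice : μH[(n - 1 : ℕ)] (ball x₀ R ∩ bottomHyperplane n hn) ≠ ∞) :
    energyE n hn p F G (ball x₀ R) v ≤
      (K ^ p + C) * volume.real (ball x₀ R \ ball x₀ r) +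
        C * μH[(n - 1 : ℕ)].real (ball x₀ R ∩ bottomHyperplane n hn) := by
  set A := ball x₀ R ∩ upperHalfSpace n hn
  have hbulk : ∫ x in A, energyDensity p F v x ≤
      (K ^ p + C) * volume.real (ball x₀ R \ ball x₀ r) := by
    have hzero : ∀ x ∈ A \ (A \ ball x₀ r), energyDensity p F v x = 0 := fun x hx =>
      energyDensity_eq_zero hp.ne' hF1 (Filter.eventuallyEq_of_mem
        (isOpen_ball.mem_nhds (not_not.1 fun h => hx.2 ⟨hx.1, h⟩)) hv1)
    rw [setIntegral_eq_of_subset_of_forall_sdiff_eq_zero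
      (measurableSet_ball.inter isOpen_upperHalfSpace.measurableSet) sdiff_subset hzero]
    calc _ ≤ ‖∫ x in A \ ball x₀ r, energyDensity p F v x‖ := Real.le_norm_self _
      _ ≤ (K ^ p + C) * volume.real (A \ ball x₀ r) := by
        refine norm_setIntegral_le_of_norm_le_const
          ((measure_mono (sdiff_subset.trans inter_subset_left)).trans_lt measure_ball_lt_top)
          fun x _ => ?_
        rw [Real.norm_of_nonneg (energyDensity_nonneg hF0 x)]
        exact energyDensity_le hp.le hv (hFv x)
      _ ≤ _ := mul_le_mul_of_nonneg_left
        (measureReal_mono (sdiff_subset_sdiff_left inter_subset_left)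
          (measure_ne_top_of_subset sdiff_subset measure_ball_lt_top.ne))
        (add_nonneg (by positivity) ((hF0 _).trans (hFv x₀)))
  have hbdry : ∫ x in ball x₀ R ∩ bottomHyperplane n hn, G (v x) ∂μH[(n - 1 : ℕ)] ≤
      C * μH[(n - 1 : ℕ)].real (ball x₀ R ∩ bottomHyperplane n hn) :=
    (Real.le_norm_self _).trans (norm_setIntegral_le_of_norm_le_const hslice.lt_top fun x _ => by
      rw [Real.norm_of_nonneg (hG0 _)]
      exact hGv x)
  exact add_le_add hbulk hbdry

end HalfSpaceEnergy

theorem exists_energyE_ballCompetitor_le (n : ℕ) (hn : 0 < n) {p : ℝ} (hp : 0 < p) {C₀ : ℝ}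
    (hC₀ : 0 ≤ C₀) (L : ℝ≥0) :
    ∃ B : ℝ, 0 ≤ B ∧ ∀ F G : ℝ → ℝ, (∀ τ, 0 ≤ F τ) → (∀ τ, 0 ≤ G τ) → PotentialBounds p C₀ F G →
      ∀ u : EuclideanSpace ℝ (Fin n) → ℝ, LipschitzWith L u → (∀ x, u x ∈ Icc (-1) 1) →
      ∀ x₀ r, 1 ≤ r →
        energyE n hn p F G (ball x₀ (r + 2)) (ballCompetitor u x₀ r) ≤ B * r ^ (n - 1) := by
  obtain ⟨Cs, hCs0, hCs⟩ := exists_hausdorffMeasure_ball_inter_bottomHyperplane_le n hn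
  have : Nontrivial (EuclideanSpace ℝ (Fin n)) := by
    have : NeZero n := ⟨hn.ne'⟩
    infer_instance
  set V := volume.real (ball (0 : EuclideanSpace ℝ (Fin n)) 1)
  set M := ((max L 1 : ℝ≥0) : ℝ) ^ p + C₀
  have hB : 0 ≤ M * (2 * n * V) + C₀ * Cs := by positivity
  refine ⟨3 ^ (n - 1) * (M * (2 * n * V) + C₀ * Cs), by positivity,
    fun F G hF0 hG0 hFG u hu hu1 x₀ r hr => ?_⟩
  have hv1 : ∀ x, ballCompetitor u x₀ r x ∈ Icc (-1) 1 := fun x => ballCompetitor_mem_Icc (hu1 x).2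
  have hslice := hCs x₀ (r + 2) (by linarith)
  have hannulus : volume.real (ball x₀ (r + 2) \ ball x₀ r) ≤ 2 * n * (r + 2) ^ (n - 1) * V := by
    have h := addHaar_ball_add_diff_ball_le volume x₀ (by linarith : 0 ≤ r) zero_le_two
    rw [finrank_euclideanSpace_fin] at h
    have h' := ENNReal.toReal_mono (by finiteness) h
    rwa [ENNReal.toReal_mul, ENNReal.toReal_ofReal (by positivity)] at h'
  calc energyE n hn p F G (ball x₀ (r + 2)) (ballCompetitor u x₀ r)
      ≤ M * volume.real (ball x₀ (r + 2) \ ball x₀ r) +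
          C₀ * μH[(n - 1 : ℕ)].real (ball x₀ (r + 2) ∩ bottomHyperplane n hn) :=
        energyE_ball_le_of_eqOn_ball hp hF0 hG0 (hFG.left_neg_one_eq_zero hp.ne' (hF0 _))
          (lipschitzWith_ballCompetitor hu)
          (fun x => (le_max_left _ _).trans (hFG.max_le_const hp.le hC₀ (hv1 x)))
          (fun x => (le_max_right _ _).trans (hFG.max_le_const hp.le hC₀ (hv1 x)))
          (fun x hx => ballCompetitor_eq_neg_one_of_mem_ball hx)
          (ne_top_of_le_ne_top (by simp) hslice)
    _ ≤ M * (2 * n * (r + 2) ^ (n - 1) * V) + C₀ * (Cs * (r + 2) ^ (n - 1)) := by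
        gcongr
        exact ENNReal.toReal_le_of_le_ofReal (by positivity) hslice
    _ = (r + 2) ^ (n - 1) * (M * (2 * n * V) + C₀ * Cs) := by ring
    _ ≤ (3 * r) ^ (n - 1) * (M * (2 * n * V) + C₀ * Cs) := by gcongr; linarith
    _ = 3 ^ (n - 1) * (M * (2 * n * V) + C₀ * Cs) * r ^ (n - 1) := by ring

theorem exists_volume_ball_inter_preimage_Ioc_le (n : ℕ) (hn : 0 < n) {p : ℝ} (hp : 0 < p) {Q : ℝ}
    (hQ : 0 ≤ Q) {C₀ : ℝ} (hC₀ : 0 < C₀) (L : ℝ≥0) {θ₀ θ : ℝ} (hθ₀ : -1 < θ₀) (hθ₀θ : θ₀ ≤ θ)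
    (hθ : θ < 1) :
    ∃ K : ℝ, 0 ≤ K ∧ ∀ F G : ℝ → ℝ, Continuous F → (∀ τ, 0 ≤ F τ) → (∀ τ, 0 ≤ G τ) →
      PotentialBounds p C₀ F G →
      ∀ u : EuclideanSpace ℝ (Fin n) → ℝ, LipschitzWith L u → (∀ x, u x ∈ Icc (-1) 1) →
      IsQMinimizer n hn p Q F G u → ∀ x₀ r, 1 ≤ r →
        volume (ball x₀ r ∩ upperHalfSpace n hn ∩ u ⁻¹' Ioc θ₀ θ) ≤
          ENNReal.ofReal (K * r ^ (n - 1)) := by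
  obtain ⟨B, hB0, hB⟩ := exists_energyE_ballCompetitor_le n hn hp hC₀.le L
  set δ := (1 - (max |θ₀| |θ|) ^ 2) ^ p / C₀
  have hδ : 0 < δ := by
    have h1 : max |θ₀| |θ| < 1 := max_lt (abs_lt.2 ⟨hθ₀, by linarith⟩) (abs_lt.2 ⟨by linarith, hθ⟩)
    have h2 : 0 < 1 - (max |θ₀| |θ|) ^ 2 := by nlinarith [(abs_nonneg θ₀).trans (le_max_left _ |θ|)]
    positivity
  refine ⟨Q * B / δ, by positivity, fun F G hF hF0 hG0 hFG u hu hu1 hmin x₀ r hr => ?_⟩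
  set S := ball x₀ r ∩ upperHalfSpace n hn ∩ u ⁻¹' Ioc θ₀ θ
  have hS : MeasurableSet S := (measurableSet_ball.inter isOpen_upperHalfSpace.measurableSet).inter
    (hu.continuous.measurable measurableSet_Ioc)
  have hSΩ : S ⊆ ball x₀ (r + 2) ∩ upperHalfSpace n hn := fun x hx =>
    ⟨ball_subset_ball (by linarith) hx.1.1, hx.1.2⟩
  have hlower : δ * volume.real S ≤ energyE n hn p F G (ball x₀ (r + 2)) u :=
    mul_measureReal_le_energyE hp.le hF hF0 hG0 hu
      (fun x => (le_max_left _ _).trans (hFG.max_le_const hp.le hC₀.le (hu1 x)))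
      measure_ball_lt_top.ne hS hSΩ
      (fun x hx => hFG.le_left_of_mem_Icc hp.le hC₀.le hθ₀.le hθ.le (Ioc_subset_Icc_self hx.2))
  have hcompare : energyE n hn p F G (ball x₀ (r + 2)) u ≤
      Q * energyE n hn p F G (ball x₀ (r + 2)) (ballCompetitor u x₀ r) := by
    simpa only [add_sub_cancel] using hmin _ isOpen_ball isBounded_ball
      (fun x => ballCompetitor u x₀ r x - u x) ⟨_, (lipschitzWith_ballCompetitor hu).sub hu⟩
      (support_ballCompetitor_sub_subset hu1)
      (fun x => by simpa only [add_sub_cancel] using ballCompetitor_mem_Icc (hu1 x).2)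
  have hreal : volume.real S ≤ Q * B / δ * r ^ (n - 1) := by
    rw [div_mul_eq_mul_div, le_div_iff₀ hδ, mul_comm, mul_assoc]
    exact hlower.trans (hcompare.trans
      (mul_le_mul_of_nonneg_left (hB F G hF0 hG0 hFG u hu hu1 x₀ r hr) hQ))
  rw [← ofReal_measureReal
    (measure_ne_top_of_subset (hSΩ.trans inter_subset_left) measure_ball_lt_top.ne)]
  exact ENNReal.ofReal_le_ofReal hreal

theorem ofReal_half_mul_pow_le_of_le_add {m : ℝ≥0∞} {n : ℕ} (hn : 0 < n) {c K r : ℝ}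
    (hc : 0 < c) (hK : 0 ≤ K) (hr : 2 * K / c ≤ r)
    (h : ENNReal.ofReal (c * r ^ n) ≤ m + ENNReal.ofReal (K * r ^ (n - 1))) :
    ENNReal.ofReal (c / 2 * r ^ n) ≤ m := by
  have hr0 : 0 ≤ r := (by positivity : 0 ≤ 2 * K / c).trans hr
  have hKr : K * r ^ (n - 1) ≤ c / 2 * r ^ n := by
    have hK' : K ≤ c / 2 * r := by linarith [(div_le_iff₀ hc).1 hr]
    rw [← Nat.sub_add_cancel hn, pow_succ, Nat.add_sub_cancel]
    nlinarith [pow_nonneg hr0 (n - 1)]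
  refine ENNReal.le_of_add_le_add_right (ENNReal.ofReal_ne_top (r := K * r ^ (n - 1))) ?_
  calc ENNReal.ofReal (c / 2 * r ^ n) + ENNReal.ofReal (K * r ^ (n - 1))
      = ENNReal.ofReal (c / 2 * r ^ n + K * r ^ (n - 1)) :=
        (ENNReal.ofReal_add (by positivity) (by positivity)).symm
    _ ≤ ENNReal.ofReal (c * r ^ n) := ENNReal.ofReal_le_ofReal (by linarith)
    _ ≤ m + ENNReal.ofReal (K * r ^ (n - 1)) := h

/-- Upgrading the density estimate from a level `θ₀ ∈ (-1,-1/2]` to any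
level `θ ∈ [θ₀,1)`: if `u` is a Lipschitz continuous `Q`-minimizer and
`Lⁿ(B⁺_r(x₀) ∩ {u > θ₀}) ≥ c rⁿ` for all `r ≥ r₀`, then there are `c' > 0` and `r₁ ≥ r₀`,
depending only on `n, Q, p, θ₀, θ, c, r₀, C₀` and the Lipschitz constant of `u`, with
`Lⁿ(B⁺_r(x₀) ∩ {u > θ}) ≥ c' rⁿ` for all `r ≥ r₁`. -/
theorem statement13 (n : ℕ) (hn : 2 ≤ n) (p : ℝ) (hp : 1 < p) (Q : ℝ) (hQ : 1 ≤ Q)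
    (C₀ : ℝ) (hC₀ : 1 ≤ C₀) (L : NNReal) (θ₀ θ c r₀ : ℝ)
    (hθ₀ : θ₀ ∈ Ioc (-1 : ℝ) (-1/2)) (hθ : θ ∈ Ico θ₀ (1 : ℝ))
    (hc : 0 < c) :
    ∃ c' r₁ : ℝ, 0 < c' ∧ r₀ ≤ r₁ ∧
      ∀ F G : ℝ → ℝ, Continuous F → Continuous G →
        (∀ τ, 0 ≤ F τ) → (∀ τ, 0 ≤ G τ) → PotentialBounds p C₀ F G →
        ∀ u : EuclideanSpace ℝ (Fin n) → ℝ, LipschitzWith L u →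
          (∀ x, u x ∈ Icc (-1 : ℝ) 1) →
          IsQMinimizer n (by omega) p Q F G u →
          ∀ x₀ ∈ closure (upperHalfSpace n (by omega)),
            (∀ r : ℝ, r₀ ≤ r →
              ENNReal.ofReal (c * r ^ n) ≤
                volume (ball x₀ r ∩ upperHalfSpace n (by omega) ∩ {x | θ₀ < u x})) →
            ∀ r : ℝ, r₁ ≤ r →
              ENNReal.ofReal (c' * r ^ n) ≤
                volume (ball x₀ r ∩ upperHalfSpace n (by omega) ∩ {x | θ < u x}) := by
  obtain ⟨K, hK0, hK⟩ := exists_volume_ball_inter_preimage_Ioc_le n (by omega)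
    (zero_lt_one.trans hp) (zero_le_one.trans hQ) (zero_lt_one.trans_le hC₀) L hθ₀.1 hθ.1 hθ.2
  refine ⟨c / 2, max r₀ (2 * K / c + 1), by positivity, le_max_left _ _, ?_⟩
  intro F G hF _ hF0 hG0 hFG u hu hu1 hmin x₀ _ hdens r hr
  have hr₀ : r₀ ≤ r := (le_max_left _ _).trans hr
  have hrK : 2 * K / c + 1 ≤ r := (le_max_right _ _).trans hr
  have hr1 : 1 ≤ r := by linarith [(by positivity : 0 ≤ 2 * K / c)]
  have hsplit : ball x₀ r ∩ upperHalfSpace n (by omega) ∩ {x | θ₀ < u x} ⊆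
      (ball x₀ r ∩ upperHalfSpace n (by omega) ∩ {x | θ < u x}) ∪
        (ball x₀ r ∩ upperHalfSpace n (by omega) ∩ u ⁻¹' Ioc θ₀ θ) := fun x ⟨hx, hθ₀x⟩ =>
    (lt_or_ge θ (u x)).imp (fun h => ⟨hx, h⟩) fun h => ⟨hx, hθ₀x, h⟩
  refine ofReal_half_mul_pow_le_of_le_add (by omega) hc hK0 (by linarith) ?_
  calc ENNReal.ofReal (c * r ^ n)
      ≤ volume (ball x₀ r ∩ upperHalfSpace n (by omega) ∩ {x | θ₀ < u x}) := hdens r hr₀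
    _ ≤ _ := (measure_mono hsplit).trans (measure_union_le _ _)
    _ ≤ _ := add_le_add_right (hK F G hF hF0 hG0 hFG u hu hu1 hmin x₀ r hr1) _
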